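/- arXiv:2404.04190 — 2 statements merged into one kernel-verified Lean document; each statement's English description precedes it below -/
import Mathlib

section
/- For every polynomial p ∈ ℝ[x_1,...,x_n], the polynomial ‖p‖_{1,T} − p belongs to the truncated pre-ordering 𝒯(1±x_1,...,1±x_n)_{deg p}. -/
section UnivariateChebyshev
open Polynomial Polynomial.Chebyshev

variable (R : Type*) [CommRing R]

theorem myMulTU (k a : ℤ) : 2 * T R k * U R a = U R (a + k) + U R (a - k) := by
  induction k using Polynomial.Chebyshev.induct with
  | zero => simp [two_mul]
  | one => rw [T_one]; linear_combination (norm := ring_nf) -U_add_one R a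
  | add_two k ih1 ih2 =>
    have h₁ := U_add_two R (a + k)
    have h₂ := U_sub_two R (a - k)
    have h₃ := T_add_two R k
    linear_combination (norm := ring_nf) 2 * U R a * h₃ - h₂ - h₁ - ih2 + 2 * (X : R[X]) * ih1
  | neg_add_one k ih1 ih2 =>
    have h₁ := U_add_two R (a + (-k - 1))
    have h₂ := U_sub_two R (a - (-k - 1))
    have h₃ := T_add_two R (-k - 1)
    linear_combination (norm := ring_nf) 2 * U R a * h₃ - h₂ - h₁ - ih2 + 2 * (X : R[X]) * ih1

theorem myTwoT (n : ℤ) : 2 * T R n = U R n - U R (n - 2) := by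
  linear_combination (norm := ring_nf) 2 * T_eq_U_sub_X_mul_U R n + U_add_two R (n - 2)

theorem myKey (a b : ℤ) :
    2 * (1 - X ^ 2) * U R a * U R b = T R (a - b) - T R (a + b + 2) := by
  have h0 := one_sub_X_sq_mul_U_eq_pol_in_T R b
  have h1 := myMulTU R (b + 1) a
  have h2 := myMulTU R (b + 2) a
  have h3 := T_eq_U_sub_X_mul_U R (a + b + 2)
  have h4 := T_eq_U_sub_X_mul_U R (a - b)
  have h5 := myTwoT R (a - b)
  linear_combination (norm := ring_nf)
    2 * U R a * h0 + (X : R[X]) * h1 - h2 + h3 + h4 - h5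

theorem evenNeg (m : ℤ) :
    (1 : R[X]) - T R (2 * m) = 2 * ((1 - X) * (1 + X)) * U R (m - 1) ^ 2 := by
  have h := myKey R (m - 1) (m - 1)
  have h0 : T R 0 = 1 := T_zero R
  linear_combination (norm := ring_nf) -h - h0

theorem evenPos (m : ℤ) : (1 : R[X]) + T R (2 * m) = 2 * T R m ^ 2 := by
  have h := T_mul_T R m m
  have h0 : T R 0 = 1 := T_zero R
  linear_combination (norm := ring_nf) -h - h0

theorem oddNeg (m : ℤ) :
    (1 : ℝ[X]) - T ℝ (2 * m + 1) = (1 - X) * (U ℝ m + U ℝ (m - 1)) ^ 2 := by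
  have hc : (1 + X : ℝ[X]) ≠ 0 := by
    intro h
    have := congrArg (fun p => Polynomial.coeff p 1) h
    simp [Polynomial.coeff_one] at this
  apply mul_left_cancel₀ (mul_ne_zero (two_ne_zero (α := ℝ[X])) hc)
  have k1 := myKey ℝ m m
  have k2 := myKey ℝ (m - 1) (m - 1)
  have k3 := myKey ℝ m (m - 1)
  have h1 := T_mul_T ℝ (2 * m + 1) 1
  have h0 : T ℝ 0 = 1 := T_zero ℝ
  have hX : T ℝ 1 = X := T_one ℝ
  linear_combination (norm := ring_nf)
    -k1 - k2 - 2 * k3 - h1 - 2 * h0 + (2 * T ℝ (2 * m + 1) - 2) * hX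

theorem oddPos (m : ℤ) :
    (1 : ℝ[X]) + T ℝ (2 * m + 1) = (1 + X) * (U ℝ m - U ℝ (m - 1)) ^ 2 := by
  have hc : (1 - X : ℝ[X]) ≠ 0 := by
    intro h
    have := congrArg (fun p => Polynomial.coeff p 1) h
    simp [Polynomial.coeff_one] at this
  apply mul_left_cancel₀ (mul_ne_zero (two_ne_zero (α := ℝ[X])) hc)
  have k1 := myKey ℝ m m
  have k2 := myKey ℝ (m - 1) (m - 1)
  have k3 := myKey ℝ m (m - 1)
  have h1 := T_mul_T ℝ (2 * m + 1) 1
  have h0 : T ℝ 0 = 1 := T_zero ℝ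
  have hX : T ℝ 1 = X := T_one ℝ
  linear_combination (norm := ring_nf)
    -k1 - k2 + 2 * k3 - h1 - 2 * h0 + (2 * T ℝ (2 * m + 1) + 2) * hX

theorem natDegree_TU_le (k : ℕ) :
    (T R (k:ℤ)).natDegree ≤ k ∧ (U R (k:ℤ)).natDegree ≤ k := by
  induction k using Nat.strong_induction_on with
  | _ k ih =>
    match k with
    | 0 => constructor <;> simp [T_zero, U_zero]
    | 1 =>
      refine ⟨by simpa [Nat.cast_one, T_one] using natDegree_X_le, ?_⟩
      rw [Nat.cast_one, U_one]
      exact (natDegree_mul_le).trans (by simpa using natDegree_X_le)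
    | (k+2) =>
      have i1 := ih (k+1) (by omega)
      have i0 := ih k (by omega)
      have hb : ∀ p q : R[X], p.natDegree ≤ k + 1 → q.natDegree ≤ k →
          (2 * X * p - q).natDegree ≤ k + 2 := by
        intro p q hp hq
        refine (natDegree_sub_le _ _).trans (max_le ?_ (hq.trans (by omega)))
        refine (natDegree_mul_le).trans ?_
        have : (2 * X : R[X]).natDegree ≤ 1 :=
          (natDegree_mul_le).trans (by simpa using natDegree_X_le)
        omega
      constructor
      · rw [show ((k+2 : ℕ) : ℤ) = (k:ℤ) + 2 by push_cast; ring, T_add_two]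
        exact hb _ _ (by exact_mod_cast i1.1) i0.1
      · rw [show ((k+2 : ℕ) : ℤ) = (k:ℤ) + 2 by push_cast; ring, U_add_two]
        exact hb _ _ (by exact_mod_cast i1.2) i0.2

theorem natDegree_T_le (k : ℕ) : (T R (k:ℤ)).natDegree ≤ k := (natDegree_TU_le R k).1
theorem natDegree_U_le (k : ℕ) : (U R (k:ℤ)).natDegree ≤ k := (natDegree_TU_le R k).2

theorem natDegree_U_le' (m : ℕ) : (U R ((m:ℤ) - 1)).natDegree ≤ m := by
  match m with
  | 0 => simp [U_neg_one]
  | (m+1) =>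
    have := natDegree_U_le R m
    rw [show ((m+1 : ℕ) : ℤ) - 1 = (m:ℤ) by push_cast; ring]
    omega

theorem coeff_T_succ : ∀ k : ℕ, (T ℝ ((k:ℤ)+1)).coeff (k+1) = 2^k := by
  intro k
  induction k using Nat.strong_induction_on with
  | _ k ih =>
    match k with
    | 0 => norm_num [Nat.cast_zero, zero_add, T_one]
    | 1 => rw [show ((1:ℕ):ℤ) + 1 = 2 by ring, T_two]; norm_num [coeff_ofNat_mul, Polynomial.coeff_one]
    | (k+2) =>
      have i1 := ih (k+1) (by omega)
      have hlow : (T ℝ ((k:ℤ)+1)).coeff (k+3) = 0 := by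
        apply coeff_eq_zero_of_natDegree_lt
        have := natDegree_T_le ℝ (k+1)
        rw [show ((k:ℤ)+1) = ((k+1 : ℕ) : ℤ) by push_cast; ring]
        omega
      rw [show ((k+2:ℕ):ℤ) + 1 = ((k:ℤ)+1) + 2 by push_cast; ring, T_add_two]
      rw [show (k+2+1 : ℕ) = (k+3 : ℕ) by ring]
      rw [show (k+3 : ℕ) = (k+2)+1 by ring, coeff_sub, mul_assoc, coeff_ofNat_mul, coeff_X_mul]
      rw [show ((k:ℤ)+1+1) = ((k+1:ℕ):ℤ) + 1 by push_cast; ring,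
        show (k+2 : ℕ) = (k+1)+1 by ring, i1,
        show (k+1+1+1 : ℕ) = k+3 by ring, hlow]
      ring

theorem coeff_T_self_ne (k : ℕ) : (T ℝ (k:ℤ)).coeff k ≠ 0 := by
  match k with
  | 0 => simp [T_zero]
  | (k+1) =>
    rw [show ((k+1:ℕ):ℤ) = (k:ℤ)+1 by push_cast; ring, coeff_T_succ]
    positivity

end UnivariateChebyshev

open MvPolynomial

set_option linter.unusedSectionVars false

/-- Truncated pre-ordering generated by the polynomials `g i`, with degree bound `r`. -/
def truncPre {σ ι : Type} [Fintype ι] [DecidableEq ι]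
    (g : ι → MvPolynomial σ ℝ) (r : ℕ) : Set (MvPolynomial σ ℝ) :=
  {p | ∃ s : Finset ι → MvPolynomial σ ℝ,
    (∀ I, IsSumSq (s I)) ∧
    (∀ I : Finset ι, (s I * ∏ i ∈ I, g i).totalDegree ≤ r) ∧
    p = ∑ I : Finset ι, s I * ∏ i ∈ I, g i}

/-- The `2n` generators `1 ± x_i`, indexed by a variable together with a sign. -/
noncomputable def pmGen {σ : Type} (v : σ × Bool) : MvPolynomial σ ℝ :=
  if v.2 then 1 + MvPolynomial.X v.1 else 1 - MvPolynomial.X v.1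

/-- Multivariate Chebyshev polynomial `T_α(x) = ∏_i T_{α i}(x_i)`. -/
noncomputable def chebT {n : ℕ} (α : Fin n → ℕ) : MvPolynomial (Fin n) ℝ :=
  ∏ i, Polynomial.aeval (MvPolynomial.X i) (Polynomial.Chebyshev.T ℝ (α i))

section SOS
variable {R : Type*} [CommRing R]

theorem sos_sq_mul {b : R} (hb : IsSumSq b) (x : R) : IsSumSq (x * x * b) := by
  induction hb with
  | zero => simpa using IsSumSq.zero
  | @sq_add y S pS ih =>
    have h : x * x * (y * y + S) = (x * y) * (x * y) + x * x * S := by ring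
    rw [h]; exact IsSumSq.sq_add _ ih

theorem sos_mul {a b : R} (ha : IsSumSq a) (hb : IsSumSq b) : IsSumSq (a * b) := by
  induction ha with
  | zero => simpa using IsSumSq.zero
  | @sq_add x S pS ih =>
    have h : (x * x + S) * b = x * x * b + S * b := by ring
    rw [h]; exact (sos_sq_mul hb x).add ih

theorem sos_sq (x : R) : IsSumSq (x ^ 2) := by
  have h : x ^ 2 = x * x + 0 := by ring
  rw [h]; exact IsSumSq.sq_add _ IsSumSq.zero

theorem sos_one : IsSumSq (1 : R) := by simpa using sos_sq (1 : R)

theorem sos_prod_sq {ι : Type*} (f : ι → R) (s : Finset ι) :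
    IsSumSq (∏ i ∈ s, (f i) ^ 2) :=
  Finset.prod_induction _ _ (fun _ _ => sos_mul) sos_one (fun i _ => sos_sq (f i))

theorem sos_sum {ι : Type*} (f : ι → R) (s : Finset ι) (h : ∀ i ∈ s, IsSumSq (f i)) :
    IsSumSq (∑ i ∈ s, f i) :=
  Finset.sum_induction _ _ (fun _ _ => IsSumSq.add) IsSumSq.zero h
end SOS

theorem sos_C {c : ℝ} (hc : 0 ≤ c) {σ : Type} : IsSumSq (C c : MvPolynomial σ ℝ) := by
  have h : (C c : MvPolynomial σ ℝ) = C (Real.sqrt c) * C (Real.sqrt c) + 0 := by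
    rw [← C_mul, Real.mul_self_sqrt hc, add_zero]
  rw [h]; exact IsSumSq.sq_add _ IsSumSq.zero

variable {σ ι : Type} [Fintype ι] [DecidableEq ι] {g : ι → MvPolynomial σ ℝ} {r s : ℕ}

theorem truncPre_single (I₀ : Finset ι) (s₀ : MvPolynomial σ ℝ) (hs : IsSumSq s₀)
    (hd : (s₀ * ∏ i ∈ I₀, g i).totalDegree ≤ r) :
    s₀ * ∏ i ∈ I₀, g i ∈ truncPre g r := by
  refine ⟨fun I => if I = I₀ then s₀ else 0, fun I => ?_, fun I => ?_, ?_⟩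
  · dsimp only; split <;> [exact hs; exact IsSumSq.zero]
  · dsimp only; split
    · next h => subst h; exact hd
    · rw [zero_mul]; simp
  · simp only [ite_mul, zero_mul]
    rw [Finset.sum_ite_eq' Finset.univ I₀ (fun I => s₀ * ∏ i ∈ I, g i)]
    simp

theorem truncPre_zero : (0 : MvPolynomial σ ℝ) ∈ truncPre g r := by
  have h := truncPre_single (g := g) (r := r) ∅ 0 IsSumSq.zero (by simp)
  simpa using h

theorem truncPre_sos {s₀ : MvPolynomial σ ℝ} (hs : IsSumSq s₀) (hd : s₀.totalDegree ≤ r) :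
    s₀ ∈ truncPre g r := by
  have h := truncPre_single (g := g) (r := r) ∅ s₀ hs (by simpa using hd)
  simpa using h

theorem truncPre_add {p q : MvPolynomial σ ℝ} (hp : p ∈ truncPre g r) (hq : q ∈ truncPre g r) :
    p + q ∈ truncPre g r := by
  obtain ⟨u, hu, hud, rfl⟩ := hp
  obtain ⟨v, hv, hvd, rfl⟩ := hq
  refine ⟨fun I => u I + v I, fun I => (hu I).add (hv I), fun I => ?_, ?_⟩
  · rw [add_mul]
    exact (totalDegree_add _ _).trans (max_le (hud I) (hvd I))
  · rw [← Finset.sum_add_distrib]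
    exact Finset.sum_congr rfl fun I _ => (add_mul _ _ _).symm

theorem truncPre_mono {p : MvPolynomial σ ℝ} (hrs : r ≤ s) (hp : p ∈ truncPre g r) :
    p ∈ truncPre g s := by
  obtain ⟨u, hu, hud, rfl⟩ := hp
  exact ⟨u, hu, fun I => (hud I).trans hrs, rfl⟩

theorem truncPre_smul {p : MvPolynomial σ ℝ} {c : ℝ} (hc : 0 ≤ c) (hp : p ∈ truncPre g r) :
    C c * p ∈ truncPre g r := by
  obtain ⟨u, hu, hud, rfl⟩ := hp
  refine ⟨fun I => C c * u I, fun I => sos_mul (sos_C hc) (hu I), fun I => ?_, ?_⟩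
  · rw [mul_assoc]
    exact (totalDegree_mul _ _).trans (by simpa [totalDegree_C] using hud I)
  · rw [Finset.mul_sum]
    exact Finset.sum_congr rfl fun I _ => (mul_assoc _ _ _).symm

theorem prod_mul_prod_eq (I J : Finset ι) :
    (∏ i ∈ I, g i) * (∏ i ∈ J, g i) =
      (∏ i ∈ I ∩ J, (g i) ^ 2) * ∏ i ∈ symmDiff I J, g i := by
  rw [← Finset.prod_union_inter]
  have h1 : I ∪ J = symmDiff I J ∪ (I ∩ J) := (symmDiff_sup_inf I J).symm
  have h2 : Disjoint (symmDiff I J) (I ∩ J) := disjoint_symmDiff_inf I J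
  rw [h1, Finset.prod_union h2]
  have h3 : ∏ i ∈ I ∩ J, (g i) ^ 2 = (∏ i ∈ I ∩ J, g i) * (∏ i ∈ I ∩ J, g i) := by
    rw [← Finset.prod_mul_distrib]; exact Finset.prod_congr rfl fun i _ => sq (g i)
  rw [h3]; ring

theorem truncPre_mul {p q : MvPolynomial σ ℝ} (hp : p ∈ truncPre g r) (hq : q ∈ truncPre g s) :
    p * q ∈ truncPre g (r + s) := by
  classical
  obtain ⟨u, hu, hud, rfl⟩ := hp
  obtain ⟨v, hv, hvd, rfl⟩ := hq
  refine ⟨fun K => ∑ P ∈ Finset.univ.filter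
      (fun P : Finset ι × Finset ι => symmDiff P.1 P.2 = K),
      u P.1 * v P.2 * ∏ i ∈ P.1 ∩ P.2, (g i) ^ 2, fun K => ?_, fun K => ?_, ?_⟩
  · exact sos_sum _ _ fun P _ => sos_mul (sos_mul (hu P.1) (hv P.2)) (sos_prod_sq _ _)
  · rw [Finset.sum_mul]
    refine (totalDegree_finset_sum _ _).trans (Finset.sup_le fun P hP => ?_)
    have hK : symmDiff P.1 P.2 = K := (Finset.mem_filter.mp hP).2
    have he : u P.1 * v P.2 * (∏ i ∈ P.1 ∩ P.2, (g i) ^ 2) * ∏ i ∈ K, g i =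
        (u P.1 * ∏ i ∈ P.1, g i) * (v P.2 * ∏ i ∈ P.2, g i) := by
      rw [← hK]
      have := prod_mul_prod_eq (g := g) P.1 P.2
      calc u P.1 * v P.2 * (∏ i ∈ P.1 ∩ P.2, (g i) ^ 2) * ∏ i ∈ symmDiff P.1 P.2, g i
          = u P.1 * v P.2 * ((∏ i ∈ P.1 ∩ P.2, (g i) ^ 2) * ∏ i ∈ symmDiff P.1 P.2, g i) := by
            ring
        _ = u P.1 * v P.2 * ((∏ i ∈ P.1, g i) * (∏ i ∈ P.2, g i)) := by rw [← this]
        _ = (u P.1 * ∏ i ∈ P.1, g i) * (v P.2 * ∏ i ∈ P.2, g i) := by ring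
    rw [he]
    exact (totalDegree_mul _ _).trans (add_le_add (hud P.1) (hvd P.2))
  · rw [Finset.sum_mul_sum]
    have key : ∀ K : Finset ι,
        (∑ P ∈ Finset.univ.filter
          (fun P : Finset ι × Finset ι => symmDiff P.1 P.2 = K),
          u P.1 * v P.2 * ∏ i ∈ P.1 ∩ P.2, (g i) ^ 2) * ∏ i ∈ K, g i =
        ∑ P ∈ Finset.univ.filter
          (fun P : Finset ι × Finset ι => symmDiff P.1 P.2 = K),
          (u P.1 * ∏ i ∈ P.1, g i) * (v P.2 * ∏ i ∈ P.2, g i) := by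
      intro K
      rw [Finset.sum_mul]
      refine Finset.sum_congr rfl fun P hP => ?_
      have hK : symmDiff P.1 P.2 = K := (Finset.mem_filter.mp hP).2
      rw [← hK]
      have := prod_mul_prod_eq (g := g) P.1 P.2
      calc u P.1 * v P.2 * (∏ i ∈ P.1 ∩ P.2, (g i) ^ 2) * ∏ i ∈ symmDiff P.1 P.2, g i
          = u P.1 * v P.2 * ((∏ i ∈ P.1 ∩ P.2, (g i) ^ 2) * ∏ i ∈ symmDiff P.1 P.2, g i) := by
            ring
        _ = u P.1 * v P.2 * ((∏ i ∈ P.1, g i) * (∏ i ∈ P.2, g i)) := by rw [← this]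
        _ = (u P.1 * ∏ i ∈ P.1, g i) * (v P.2 * ∏ i ∈ P.2, g i) := by ring
    rw [Finset.sum_congr rfl fun K _ => key K]
    rw [Finset.sum_fiberwise_of_maps_to (fun P _ => Finset.mem_univ _)]
    rw [← Finset.sum_product']
    rfl

section Certificates
variable {σ : Type} [Fintype σ] [DecidableEq σ]

-- new material
theorem totalDegree_aeval_le {σ : Type} (q : Polynomial ℝ) (i : σ) :
    ((Polynomial.aeval (X i : MvPolynomial σ ℝ)) q).totalDegree ≤ q.natDegree := by
  rw [Polynomial.aeval_eq_sum_range]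
  refine (totalDegree_finset_sum _ _).trans (Finset.sup_le fun j hj => ?_)
  refine (totalDegree_smul_le _ _).trans ?_
  rw [totalDegree_X_pow]
  exact Nat.lt_succ_iff.mp (Finset.mem_range.mp hj)


theorem totalDegree_pmGen_le (v : σ × Bool) : (pmGen v).totalDegree ≤ 1 := by
  rcases v with ⟨i, b⟩
  cases b <;> simp only [pmGen, if_true, if_false, Bool.false_eq_true]
  · rw [sub_eq_add_neg]
    refine (totalDegree_add _ _).trans (max_le (by simp) ?_)
    rw [totalDegree_neg, totalDegree_X]
  · refine (totalDegree_add _ _).trans (max_le (by simp) ?_)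
    rw [totalDegree_X]

theorem sos_two_sq (y : MvPolynomial σ ℝ) : IsSumSq (2 * y ^ 2) := by
  have h : 2 * y ^ 2 = y * y + (y * y + 0) := by ring
  rw [h]
  exact IsSumSq.sq_add _ (IsSumSq.sq_add _ IsSumSq.zero)

theorem totalDegree_prod_pmGen_le (I : Finset (σ × Bool)) :
    (∏ v ∈ I, pmGen v).totalDegree ≤ I.card := by
  refine (totalDegree_finset_prod _ _).trans ?_
  calc ∑ v ∈ I, (pmGen v).totalDegree ≤ ∑ v ∈ I, 1 :=
        Finset.sum_le_sum fun v _ => totalDegree_pmGen_le v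
    _ = I.card := by simp

theorem two_eq_C : (2 : MvPolynomial σ ℝ) = C (2 : ℝ) := by
  rw [map_ofNat]

theorem cert_neg (i : σ) (k : ℕ) :
    (1 : MvPolynomial σ ℝ) - Polynomial.aeval (X i) (Polynomial.Chebyshev.T ℝ (k:ℤ))
      ∈ truncPre (pmGen (σ := σ)) k := by
  rcases Nat.even_or_odd k with ⟨m, hm⟩ | ⟨m, hm⟩
  · rcases Nat.eq_zero_or_pos m with rfl | hmpos
    · subst hm
      simpa [Polynomial.Chebyshev.T_zero] using truncPre_zero (σ := σ) (g := pmGen) (r := 0)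
    obtain ⟨m', rfl⟩ : ∃ m', m = m' + 1 := ⟨m - 1, by omega⟩
    have hk : (k:ℤ) = 2 * ((m' + 1 : ℕ) : ℤ) := by rw [hm]; push_cast; ring
    have happ := congrArg (Polynomial.aeval (X i : MvPolynomial σ ℝ)) (evenNeg ℝ ((m' + 1 : ℕ) : ℤ))
    simp only [map_sub, map_add, map_mul, map_one, map_pow, map_ofNat,
      Polynomial.aeval_X] at happ
    set y : MvPolynomial σ ℝ :=
      Polynomial.aeval (X i : MvPolynomial σ ℝ) (Polynomial.Chebyshev.U ℝ (((m' + 1 : ℕ) : ℤ) - 1))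
      with hy
    have hprod : ∏ v ∈ ({(i, false), (i, true)} : Finset (σ × Bool)), pmGen v
        = (1 - X i) * (1 + X i) := by
      rw [Finset.prod_pair (by simp)]
      simp [pmGen]
    have key : (1 : MvPolynomial σ ℝ)
          - Polynomial.aeval (X i : MvPolynomial σ ℝ) (Polynomial.Chebyshev.T ℝ (k:ℤ))
        = (2 * y ^ 2) * ∏ v ∈ ({(i, false), (i, true)} : Finset (σ × Bool)), pmGen v := by
      rw [hk, happ, hprod]; ring
    rw [key]
    refine truncPre_single _ _ (sos_two_sq y) ?_
    refine (totalDegree_mul _ _).trans ?_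
    have h1 : (2 * y ^ 2).totalDegree ≤ 2 * m' := by
      refine (totalDegree_mul _ _).trans ?_
      rw [two_eq_C, totalDegree_C, zero_add]
      refine (totalDegree_pow _ _).trans ?_
      have hyd : y.totalDegree ≤ m' := by
        rw [hy, show (((m' + 1 : ℕ) : ℤ) - 1) = (m' : ℤ) by push_cast; ring]
        exact (totalDegree_aeval_le _ _).trans (natDegree_U_le ℝ m')
      omega
    have h2 := totalDegree_prod_pmGen_le (σ := σ) {(i, false), (i, true)}
    have h3 : ({(i, false), (i, true)} : Finset (σ × Bool)).card ≤ 2 :=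
      (Finset.card_insert_le _ _).trans (by simp)
    omega
  · have hk : (k:ℤ) = 2 * (m : ℤ) + 1 := by rw [hm]; push_cast; ring
    have happ := congrArg (Polynomial.aeval (X i : MvPolynomial σ ℝ)) (oddNeg (m : ℤ))
    simp only [map_sub, map_add, map_mul, map_one, map_pow, Polynomial.aeval_X] at happ
    set y : MvPolynomial σ ℝ :=
      Polynomial.aeval (X i : MvPolynomial σ ℝ)
        (Polynomial.Chebyshev.U ℝ (m : ℤ) + Polynomial.Chebyshev.U ℝ ((m : ℤ) - 1)) with hy
    have hprod : ∏ v ∈ ({(i, false)} : Finset (σ × Bool)), pmGen v = 1 - X i := by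
      simp [pmGen]
    have key : (1 : MvPolynomial σ ℝ)
          - Polynomial.aeval (X i : MvPolynomial σ ℝ) (Polynomial.Chebyshev.T ℝ (k:ℤ))
        = y ^ 2 * ∏ v ∈ ({(i, false)} : Finset (σ × Bool)), pmGen v := by
      rw [hk, happ, hprod, hy, map_add]; ring
    rw [key]
    refine truncPre_single _ _ (sos_sq y) ?_
    refine (totalDegree_mul _ _).trans ?_
    have h1 : y.totalDegree ≤ m := by
      rw [hy]
      refine (totalDegree_aeval_le _ _).trans ?_
      exact (Polynomial.natDegree_add_le _ _).trans
        (max_le (natDegree_U_le ℝ m) (natDegree_U_le' ℝ m))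
    have h2 : (y ^ 2).totalDegree ≤ 2 * m := by
      have := totalDegree_pow y 2
      omega
    have h3 := totalDegree_prod_pmGen_le (σ := σ) {(i, false)}
    simp only [Finset.card_singleton] at h3
    omega

theorem cert_pos (i : σ) (k : ℕ) :
    (1 : MvPolynomial σ ℝ) + Polynomial.aeval (X i) (Polynomial.Chebyshev.T ℝ (k:ℤ))
      ∈ truncPre (pmGen (σ := σ)) k := by
  rcases Nat.even_or_odd k with ⟨m, hm⟩ | ⟨m, hm⟩
  · have hk : (k:ℤ) = 2 * (m : ℤ) := by rw [hm]; push_cast; ring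
    have happ := congrArg (Polynomial.aeval (X i : MvPolynomial σ ℝ)) (evenPos ℝ (m : ℤ))
    simp only [map_add, map_mul, map_one, map_pow, map_ofNat, Polynomial.aeval_X] at happ
    set y : MvPolynomial σ ℝ :=
      Polynomial.aeval (X i : MvPolynomial σ ℝ) (Polynomial.Chebyshev.T ℝ (m : ℤ)) with hy
    have key : (1 : MvPolynomial σ ℝ)
          + Polynomial.aeval (X i : MvPolynomial σ ℝ) (Polynomial.Chebyshev.T ℝ (k:ℤ))
        = 2 * y ^ 2 := by rw [hk, happ]
    rw [key]
    refine truncPre_sos (sos_two_sq y) ?_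
    refine (totalDegree_mul _ _).trans ?_
    rw [two_eq_C, totalDegree_C, zero_add]
    refine (totalDegree_pow _ _).trans ?_
    have hyd : y.totalDegree ≤ m := by
      rw [hy]
      exact (totalDegree_aeval_le _ _).trans (natDegree_T_le ℝ m)
    omega
  · have hk : (k:ℤ) = 2 * (m : ℤ) + 1 := by rw [hm]; push_cast; ring
    have happ := congrArg (Polynomial.aeval (X i : MvPolynomial σ ℝ)) (oddPos (m : ℤ))
    simp only [map_sub, map_add, map_mul, map_one, map_pow, Polynomial.aeval_X] at happ
    set y : MvPolynomial σ ℝ :=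
      Polynomial.aeval (X i : MvPolynomial σ ℝ)
        (Polynomial.Chebyshev.U ℝ (m : ℤ) - Polynomial.Chebyshev.U ℝ ((m : ℤ) - 1)) with hy
    have hprod : ∏ v ∈ ({(i, true)} : Finset (σ × Bool)), pmGen v = 1 + X i := by
      simp [pmGen]
    have key : (1 : MvPolynomial σ ℝ)
          + Polynomial.aeval (X i : MvPolynomial σ ℝ) (Polynomial.Chebyshev.T ℝ (k:ℤ))
        = y ^ 2 * ∏ v ∈ ({(i, true)} : Finset (σ × Bool)), pmGen v := by
      rw [hk, happ, hprod, hy, map_sub]; ring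
    rw [key]
    refine truncPre_single _ _ (sos_sq y) ?_
    refine (totalDegree_mul _ _).trans ?_
    have h1 : y.totalDegree ≤ m := by
      rw [hy]
      refine (totalDegree_aeval_le _ _).trans ?_
      exact (Polynomial.natDegree_sub_le _ _).trans
        (max_le (natDegree_U_le ℝ m) (natDegree_U_le' ℝ m))
    have h2 : (y ^ 2).totalDegree ≤ 2 * m := by
      have := totalDegree_pow y 2
      omega
    have h3 := totalDegree_prod_pmGen_le (σ := σ) {(i, true)}
    simp only [Finset.card_singleton] at h3
    omega

theorem sos_two : IsSumSq (2 : MvPolynomial σ ℝ) := by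
  have h := sos_two_sq (1 : MvPolynomial σ ℝ)
  simpa using h

theorem cert_prod (α : σ → ℕ) (S : Finset σ) :
    ((1 : MvPolynomial σ ℝ)
        - ∏ i ∈ S, Polynomial.aeval (X i) (Polynomial.Chebyshev.T ℝ (α i : ℤ))
      ∈ truncPre (pmGen (σ := σ)) (∑ i ∈ S, α i)) ∧
    ((1 : MvPolynomial σ ℝ)
        + ∏ i ∈ S, Polynomial.aeval (X i) (Polynomial.Chebyshev.T ℝ (α i : ℤ))
      ∈ truncPre (pmGen (σ := σ)) (∑ i ∈ S, α i)) := by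
  induction S using Finset.induction with
  | empty =>
    constructor
    · simpa using truncPre_zero (σ := σ) (g := pmGen) (r := 0)
    · have : (1 : MvPolynomial σ ℝ) + ∏ i ∈ (∅ : Finset σ), Polynomial.aeval (X i)
          (Polynomial.Chebyshev.T ℝ (α i : ℤ)) = 2 := by simp; ring
      rw [this]
      refine truncPre_sos sos_two ?_
      rw [two_eq_C, totalDegree_C]
      simp
  | @insert i S hiS ih =>
    set a : MvPolynomial σ ℝ := Polynomial.aeval (X i) (Polynomial.Chebyshev.T ℝ (α i : ℤ))
    set b : MvPolynomial σ ℝ :=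
      ∏ j ∈ S, Polynomial.aeval (X j) (Polynomial.Chebyshev.T ℝ (α j : ℤ)) with hb
    have hA₁ := cert_neg i (α i)
    have hA₂ := cert_pos i (α i)
    have hB₁ := ih.1
    have hB₂ := ih.2
    have h2 : (C (1/2 : ℝ) : MvPolynomial σ ℝ) * 2 = 1 := by
      rw [two_eq_C, ← C_mul]; norm_num
    rw [Finset.prod_insert hiS, Finset.sum_insert hiS]
    constructor
    · have hId : (1 : MvPolynomial σ ℝ) - a * b
          = C (1/2 : ℝ) * ((1 - a) * (1 + b) + (1 + a) * (1 - b)) := by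
        linear_combination (-(1 - a * b)) * h2
      rw [hId]
      exact truncPre_smul (by norm_num)
        (truncPre_add (truncPre_mul hA₁ hB₂) (truncPre_mul hA₂ hB₁))
    · have hId : (1 : MvPolynomial σ ℝ) + a * b
          = C (1/2 : ℝ) * ((1 - a) * (1 - b) + (1 + a) * (1 + b)) := by
        linear_combination (-(1 + a * b)) * h2
      rw [hId]
      exact truncPre_smul (by norm_num)
        (truncPre_add (truncPre_mul hA₁ hB₁) (truncPre_mul hA₂ hB₂))

end Certificates

theorem coeff_aeval_X {σ : Type} [DecidableEq σ] (q : Polynomial ℝ) (a : σ) (u : σ →₀ ℕ) :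
    MvPolynomial.coeff u (Polynomial.aeval (X a : MvPolynomial σ ℝ) q) =
      if u = Finsupp.single a (u a) then q.coeff (u a) else 0 := by
  induction q using Polynomial.induction_on' with
  | add p r hp hr =>
    rw [map_add, coeff_add, hp, hr, Polynomial.coeff_add]
    split <;> simp
  | monomial j c =>
    have h1 : (Polynomial.aeval (X a : MvPolynomial σ ℝ)) (Polynomial.monomial j c)
        = monomial (Finsupp.single a j) c := by
      rw [Polynomial.aeval_monomial, ← C_mul_X_pow_eq_monomial]
      rfl
    rw [h1, coeff_monomial, Polynomial.coeff_monomial]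
    by_cases hu : u = Finsupp.single a (u a)
    · rw [if_pos hu]
      by_cases hj : j = u a
      · subst hj; rw [if_pos hu.symm, if_pos rfl]
      · rw [if_neg, if_neg hj]
        intro h
        apply hj
        have := congrArg (fun f : σ →₀ ℕ => f a) h
        simpa using this
    · rw [if_neg hu, if_neg]
      intro h
      apply hu
      have hua : u a = j := by
        have := congrArg (fun f : σ →₀ ℕ => f a) h
        simpa using this.symm
      rw [hua]
      exact h.symm

open scoped Classical in
theorem coeff_prod_aeval {σ : Type} [DecidableEq σ] (q : σ → Polynomial ℝ) (S : Finset σ)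
    (u : σ →₀ ℕ) :
    MvPolynomial.coeff u (∏ i ∈ S, Polynomial.aeval (X i : MvPolynomial σ ℝ) (q i)) =
      if ∀ j, j ∉ S → u j = 0 then ∏ i ∈ S, (q i).coeff (u i) else 0 := by
  induction S using Finset.induction generalizing u with
  | empty =>
    simp only [Finset.prod_empty, Finset.notMem_empty, not_false_iff, true_implies]
    by_cases h : u = 0
    · subst h; simp [coeff_one]
    · have h2 : ¬ ∀ j, u j = 0 := fun hall => h (Finsupp.ext hall)
      rw [if_neg h2, coeff_one, if_neg (fun h' => h h'.symm)]
  | @insert a S haS ih =>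
    rw [Finset.prod_insert haS, coeff_mul]
    rw [Finset.sum_eq_single (Finsupp.single a (u a), u.erase a)]
    · rw [coeff_aeval_X, if_pos (by simp), Finsupp.single_eq_same, ih]
      have hcond : (∀ j, j ∉ S → (u.erase a) j = 0) ↔ (∀ j, j ∉ insert a S → u j = 0) := by
        constructor
        · intro h j hj
          have hja : j ≠ a := fun h' => hj (h' ▸ Finset.mem_insert_self a S)
          have hjS : j ∉ S := fun h' => hj (Finset.mem_insert_of_mem h')
          have h3 := h j hjS
          rwa [Finsupp.erase_ne hja] at h3
        · intro h j hjS
          by_cases hja : j = a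
          · subst hja; simp [Finsupp.erase_same]
          · rw [Finsupp.erase_ne hja]
            exact h j (by simp [hja, hjS])
      have hprod : ∏ i ∈ S, (q i).coeff ((u.erase a) i) = ∏ i ∈ S, (q i).coeff (u i) :=
        Finset.prod_congr rfl fun i hi =>
          by rw [Finsupp.erase_ne (fun h : i = a => absurd (h ▸ hi) haS)]
      rw [hprod, Finset.prod_insert haS]
      by_cases hC : ∀ j, j ∉ insert a S → u j = 0
      · rw [if_pos (hcond.mpr hC), if_pos hC]
      · rw [if_neg (fun h => hC (hcond.mp h)), if_neg hC, mul_zero]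
    · rintro ⟨v, w⟩ hvw hne
      have hsum : v + w = u := Finset.HasAntidiagonal.mem_antidiagonal.mp hvw
      rw [coeff_aeval_X]
      by_cases hv : v = Finsupp.single a (v a)
      case neg => rw [if_neg hv, zero_mul]
      case pos =>
        rw [if_pos hv]
        have hadd : v a + w a = u a := by
          have := congrArg (fun f : σ →₀ ℕ => f a) hsum
          simpa using this
        by_cases hva : v a = u a
        case pos =>
          exfalso
          apply hne
          have hveq : v = Finsupp.single a (u a) := by rw [hv, hva]
          have hweq : w = u.erase a := by
            ext j
            by_cases hja : j = a
            · subst hja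
              rw [Finsupp.erase_same]
              omega
            · have hj := congrArg (fun f : σ →₀ ℕ => f j) hsum
              simp only [Finsupp.add_apply] at hj
              have hvj : v j = 0 := by
                rw [hv]
                exact Finsupp.single_eq_of_ne (fun h => hja h)
              rw [Finsupp.erase_ne hja]
              omega
          rw [hveq, hweq]
        case neg =>
          have hwa : w a ≠ 0 := by omega
          rw [ih, if_neg (fun h => hwa (h a haS)), mul_zero]
    · intro h
      exact absurd (Finset.HasAntidiagonal.mem_antidiagonal.mpr (Finsupp.single_add_erase a u)) h

theorem sum_le_totalDegree {n : ℕ} (c : (Fin n → ℕ) →₀ ℝ) (α : Fin n → ℕ)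
    (hα : α ∈ c.support) :
    (∑ i, α i) ≤ (c.sum fun β a => C a * chebT β).totalDegree := by
  classical
  obtain ⟨γ, hγ, hmax⟩ := Finset.exists_max_image c.support (fun β => ∑ i, β i) ⟨α, hα⟩
  refine le_trans (hmax α hα) ?_
  set u : Fin n →₀ ℕ := Finsupp.equivFunOnFinite.symm γ with hudef
  have hu : ∀ i, u i = γ i := fun i => rfl
  have hch : ∀ β : Fin n → ℕ, MvPolynomial.coeff u (chebT β) =
      ∏ i, (Polynomial.Chebyshev.T ℝ (β i : ℤ)).coeff (γ i) := by
    intro β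
    rw [chebT, coeff_prod_aeval]
    rw [if_pos (fun j hj => absurd (Finset.mem_univ j) hj)]
    exact Finset.prod_congr rfl fun i _ => by rw [hu i]
  have hcoeff : MvPolynomial.coeff u (c.sum fun β a => C a * chebT β) ≠ 0 := by
    rw [Finsupp.sum, coeff_sum]
    simp only [coeff_C_mul]
    rw [Finset.sum_eq_single γ]
    · refine mul_ne_zero (Finsupp.mem_support_iff.mp hγ) ?_
      rw [hch]
      exact Finset.prod_ne_zero_iff.mpr fun i _ => coeff_T_self_ne (γ i)
    · intro β hβ hne
      have hex : ∃ i, β i < γ i := by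
        by_contra hno
        push_neg at hno
        have h1 : ∑ i, γ i ≤ ∑ i, β i := Finset.sum_le_sum fun i _ => hno i
        have h2 : ∑ i, β i ≤ ∑ i, γ i := hmax β hβ
        have heq := (Finset.sum_eq_sum_iff_of_le fun i (_ : i ∈ Finset.univ) => hno i).mp
          (le_antisymm h1 h2)
        exact hne (funext fun i => (heq i (Finset.mem_univ i)).symm)
      obtain ⟨i, hi⟩ := hex
      rw [hch]
      refine mul_eq_zero_of_right _ (Finset.prod_eq_zero (Finset.mem_univ i) ?_)
      exact Polynomial.coeff_eq_zero_of_natDegree_lt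
        (lt_of_le_of_lt (natDegree_T_le ℝ (β i)) hi)
    · intro h
      exact absurd hγ h
  have hle := MvPolynomial.le_totalDegree (MvPolynomial.mem_support_iff.mpr hcoeff)
  calc ∑ i, γ i = u.sum fun _ e => e := by
        rw [Finsupp.sum_fintype]
        · exact Finset.sum_congr rfl fun i _ => (hu i).symm
        · intro i; rfl
    _ ≤ _ := hle

section FinalAux
variable {σ ι : Type} [Fintype ι] [DecidableEq ι] {g : ι → MvPolynomial σ ℝ} {r : ℕ}

theorem truncPre_sum {β : Type*} {A : Finset β} {f : β → MvPolynomial σ ℝ}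
    (h : ∀ x ∈ A, f x ∈ truncPre g r) : (∑ x ∈ A, f x) ∈ truncPre g r := by
  classical
  induction A using Finset.induction with
  | empty => simpa using truncPre_zero
  | @insert a A haA ih =>
    rw [Finset.sum_insert haA]
    exact truncPre_add (h a (Finset.mem_insert_self a A))
      (ih fun x hx => h x (Finset.mem_insert_of_mem hx))
end FinalAux

/-- If `p = ∑_α p_α T_α` is the Chebyshev expansion of `p` and
`‖p‖_{1,T} = ∑_α |p_α|`, then `‖p‖_{1,T} − p ∈ 𝒯(1±x_1,...,1±x_n)_{deg p}`. -/
theorem chebNorm_sub_self_mem_truncPre (n : ℕ) (p : MvPolynomial (Fin n) ℝ)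
    (c : (Fin n → ℕ) →₀ ℝ)
    (hc : p = c.sum fun α a => MvPolynomial.C a * chebT α) :
    MvPolynomial.C (c.sum fun _ a => |a|) - p ∈
      truncPre (pmGen (σ := Fin n)) p.totalDegree := by
  subst hc
  have hrw : MvPolynomial.C (c.sum fun _ a => |a|)
        - (c.sum fun α a => MvPolynomial.C a * chebT α)
      = ∑ α ∈ c.support, (C |c α| - C (c α) * chebT α) := by
    rw [Finsupp.sum, Finsupp.sum, map_sum, Finset.sum_sub_distrib]
  rw [hrw]
  refine truncPre_sum fun α hα => ?_
  have hdeg := sum_le_totalDegree c α hα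
  have hcert := cert_prod α Finset.univ
  rcases le_or_gt 0 (c α) with ha | ha
  · have heq : C |c α| - C (c α) * chebT α = C (c α) * (1 - chebT α) := by
      rw [abs_of_nonneg ha]; ring
    rw [heq]
    refine truncPre_smul ha (truncPre_mono hdeg ?_)
    exact hcert.1
  · have heq : C |c α| - C (c α) * chebT α = C (-(c α)) * (1 + chebT α) := by
      rw [abs_of_neg ha, map_neg]; ring
    rw [heq]
    refine truncPre_smul (by linarith) (truncPre_mono hdeg ?_)
    exact hcert.2
end

section
/- Let f ∈ ℝ[x_1,...,x_n] with deg f < 2d, and let λ_0, λ_1, ..., λ_n ≥ 0 be such that the polynomial f(x) + λ_0 + Σ_{i=1}^n λ_i x_i^{2d} is a sum of squares of polynomials of degree at most 2d. Then f + Σ_{i=0}^n λ_i belongs to the truncated pre-ordering 𝒯(1±x_1,...,1±x_n)_{2d}. -/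
open MvPolynomial

/-!
Since `(1 + x)(1 - x) ∑_{k<d} x^{2k} = 1 - x^{2d}`, each `λ_i (1 - x_i^{2d})` lies in the
pre-ordering with degree at most `2d`, the sum of squares `λ_i ∑_{k<d} x_i^{2k}` multiplying
the generator product `(1 + x_i)(1 - x_i)`. Adding these to the given sum of squares
`f + λ₀ + ∑ λ_i x_i^{2d}` cancels the top-degree terms and leaves `f + ∑_{i=0}^n λ_i`.
-/

section TruncPre

variable {σ ι : Type} [Fintype ι] [DecidableEq ι] (g : ι → MvPolynomial σ ℝ) (r : ℕ)

def truncPreAddSubmonoid : AddSubmonoid (MvPolynomial σ ℝ) where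
  carrier := truncPre g r
  zero_mem' := ⟨0, fun _ => IsSumSq.zero, fun _ => by simp, by simp⟩
  add_mem' := by
    rintro _ _ ⟨s, hs_sos, hs_deg, rfl⟩ ⟨t, ht_sos, ht_deg, rfl⟩
    refine ⟨s + t, fun I => (hs_sos I).add (ht_sos I), fun I => ?_, ?_⟩
    · rw [Pi.add_apply, add_mul]
      exact (totalDegree_add _ _).trans (max_le (hs_deg I) (ht_deg I))
    · simp only [Pi.add_apply, add_mul, Finset.sum_add_distrib]

variable {g r}

theorem sumSq_mul_prod_mem_truncPre {q : MvPolynomial σ ℝ} (hq : IsSumSq q) (J : Finset ι)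
    (hdeg : (q * ∏ i ∈ J, g i).totalDegree ≤ r) : q * ∏ i ∈ J, g i ∈ truncPre g r := by
  refine ⟨Pi.single J q, fun I => ?_, fun I => ?_, ?_⟩
  · by_cases hI : I = J
    · subst hI; simpa using hq
    · simp [hI]
  · by_cases hI : I = J
    · subst hI; simpa using hdeg
    · simp [hI]
  · rw [Finset.sum_eq_single_of_mem J (Finset.mem_univ J) fun I _ hI => by simp [hI],
      Pi.single_eq_same]

theorem sumSq_mem_truncPre {p : MvPolynomial σ ℝ} (hp : IsSumSq p) (hdeg : p.totalDegree ≤ r) :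
    p ∈ truncPre g r := by
  simpa using sumSq_mul_prod_mem_truncPre (g := g) hp ∅ (by simpa using hdeg)

end TruncPre

theorem one_add_mul_one_sub_mul_sum_sq {R : Type*} [CommRing R] (x : R) (d : ℕ) :
    (1 + x) * (1 - x) * ∑ k ∈ Finset.range d, (x ^ k) ^ 2 = 1 - x ^ (2 * d) := by
  simp_rw [← pow_mul, mul_comm _ 2, pow_mul]
  rw [← mul_neg_geom_sum]
  ring

theorem isSumSq_C_mul {σ : Type} {c : ℝ} (hc : 0 ≤ c) {p : MvPolynomial σ ℝ} (hp : IsSumSq p) :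
    IsSumSq (C c * p) := by
  rw [← Real.mul_self_sqrt hc, C_mul]
  exact (IsSumSq.mul_self _).mul hp

theorem C_mul_one_sub_X_pow_mem_truncPre {σ : Type} [Fintype σ] [DecidableEq σ] {c : ℝ} (hc : 0 ≤ c) (j : σ) (d : ℕ) :
    C c * (1 - X j ^ (2 * d)) ∈ truncPre (pmGen (σ := σ)) (2 * d) := by
  have hprod : ∏ v ∈ {(j, true), (j, false)}, pmGen v = (1 + X j) * (1 - X j) := by
    rw [Finset.prod_pair (by simp)]
    simp [pmGen]
  have hfactor : C c * (1 - X j ^ (2 * d)) =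
      (C c * ∑ k ∈ Finset.range d, (X j ^ k) ^ 2) * ∏ v ∈ {(j, true), (j, false)}, pmGen v := by
    rw [hprod, ← one_add_mul_one_sub_mul_sum_sq]
    ring
  rw [hfactor]
  refine sumSq_mul_prod_mem_truncPre (isSumSq_C_mul hc (IsSumSq.sum_sq _ _)) _ ?_
  rw [← hfactor]
  refine (totalDegree_mul _ _).trans ?_
  simp only [totalDegree_C, zero_add]
  refine (totalDegree_sub _ _).trans (max_le (by simp) ?_)
  exact (totalDegree_pow _ _).trans (by simp [totalDegree_X])

theorem lasserre_sos_approx_implies_truncPre_general (n d : ℕ) (f : MvPolynomial (Fin n) ℝ)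
    (lam0 : ℝ) (lam : Fin n → ℝ) (hlam : ∀ i, 0 ≤ lam i)
    (hsos : IsSumSq (f + MvPolynomial.C lam0 +
        ∑ i : Fin n, MvPolynomial.C (lam i) * MvPolynomial.X i ^ (2 * d)))
    (hdeg : (f + MvPolynomial.C lam0 +
        ∑ i : Fin n, MvPolynomial.C (lam i) * MvPolynomial.X i ^ (2 * d)).totalDegree
          ≤ 2 * d) :
    f + MvPolynomial.C (lam0 + ∑ i : Fin n, lam i) ∈
      truncPre (pmGen (σ := Fin n)) (2 * d) := by
  let T := truncPreAddSubmonoid (pmGen (σ := Fin n)) (2 * d)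
  have hsplit : f + C (lam0 + ∑ i, lam i) =
      (f + C lam0 + ∑ i, C (lam i) * X i ^ (2 * d)) + ∑ i, C (lam i) * (1 - X i ^ (2 * d)) := by
    simp only [map_add, map_sum, mul_sub, mul_one, Finset.sum_sub_distrib]
    ring
  rw [hsplit]
  exact T.add_mem (sumSq_mem_truncPre hsos hdeg)
    (T.sum_mem fun i _ => C_mul_one_sub_X_pow_mem_truncPre (hlam i) i d)

/-- If `deg f < 2d`, `λ₀, λ_1, ..., λ_n ≥ 0`, and `f + λ₀ + ∑_i λ_i x_i^{2d}` is a
sum of squares of polynomials of degree at most `2d`, then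
`f + ∑_{i=0}^n λ_i ∈ 𝒯(1±x_1,...,1±x_n)_{2d}`. -/
theorem lasserre_sos_approx_implies_truncPre (n d : ℕ) (f : MvPolynomial (Fin n) ℝ)
    (hdf : f.totalDegree < 2 * d)
    (lam0 : ℝ) (lam : Fin n → ℝ) (hlam0 : 0 ≤ lam0) (hlam : ∀ i, 0 ≤ lam i)
    (hsos : IsSumSq (f + MvPolynomial.C lam0 +
        ∑ i : Fin n, MvPolynomial.C (lam i) * MvPolynomial.X i ^ (2 * d)))
    (hdeg : (f + MvPolynomial.C lam0 +
        ∑ i : Fin n, MvPolynomial.C (lam i) * MvPolynomial.X i ^ (2 * d)).totalDegree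
          ≤ 2 * d) :
    f + MvPolynomial.C (lam0 + ∑ i : Fin n, lam i) ∈
      truncPre (pmGen (σ := Fin n)) (2 * d) :=
  lasserre_sos_approx_implies_truncPre_general n d f lam0 lam hlam hsos hdeg
end
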